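/- Let A be a Frobenius category and P its full subcategory of projective objects. For every object A of A, the P-module h_A = Hom_A(−, A)|_P is a Cohen-Macaulay P-module. -/

import Mathlib

universe v u

open CategoryTheory Limits

namespace Paper

variable {A : Type u} [Category.{v} A]

section Defs
variable [Preadditive A]

/-- `i` is a kernel of `d`. -/
def IsKer {X Y Z : A} (i : X ⟶ Y) (d : Y ⟶ Z) : Prop :=
  i ≫ d = 0 ∧ ∀ ⦃W : A⦄ (g : W ⟶ Y), g ≫ d = 0 → ∃! g' : W ⟶ X, g' ≫ i = g

/-- `d` is a cokernel of `i`. -/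
def IsCoker {X Y Z : A} (i : X ⟶ Y) (d : Y ⟶ Z) : Prop :=
  i ≫ d = 0 ∧ ∀ ⦃W : A⦄ (g : Y ⟶ W), i ≫ g = 0 → ∃! g' : Z ⟶ W, d ≫ g' = g

/-- An exact structure in the sense of Quillen (following Keller's axioms) on an
additive category `A`: a class of kernel-cokernel pairs (conflations), closed under
isomorphism, satisfying the axioms (Ex0), (Ex1), (Ex1op), (Ex2), (Ex2op). -/
structure ExactStructure (A : Type u) [Category.{v} A] [Preadditive A] where
  /-- the class of conflations `X ⟶ Y ⟶ Z` -/
  IsConflation : ∀ ⦃X Y Z : A⦄, (X ⟶ Y) → (Y ⟶ Z) → Prop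
  ker_of_conflation : ∀ ⦃X Y Z : A⦄ {i : X ⟶ Y} {d : Y ⟶ Z}, IsConflation i d → IsKer i d
  coker_of_conflation : ∀ ⦃X Y Z : A⦄ {i : X ⟶ Y} {d : Y ⟶ Z}, IsConflation i d → IsCoker i d
  iso_closed : ∀ ⦃X Y Z X' Y' Z' : A⦄ {i : X ⟶ Y} {d : Y ⟶ Z} {i' : X' ⟶ Y'} {d' : Y' ⟶ Z'}
    (eX : X ≅ X') (eY : Y ≅ Y') (eZ : Z ≅ Z'),
    i ≫ eY.hom = eX.hom ≫ i' → d ≫ eZ.hom = eY.hom ≫ d' →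
    IsConflation i d → IsConflation i' d'
  ex0 : ∀ ⦃Z : A⦄, IsZero Z → ∃ (X : A) (i : X ⟶ Z), IsConflation i (𝟙 Z)
  ex1 : ∀ ⦃Y Z W : A⦄ {d : Y ⟶ Z} {e : Z ⟶ W},
    (∃ (X : A) (i : X ⟶ Y), IsConflation i d) → (∃ (X : A) (i : X ⟶ Z), IsConflation i e) →
    ∃ (X : A) (i : X ⟶ Y), IsConflation i (d ≫ e)
  ex1op : ∀ ⦃X Y W : A⦄ {i : X ⟶ Y} {j : Y ⟶ W},
    (∃ (Z : A) (d : Y ⟶ Z), IsConflation i d) → (∃ (Z : A) (d : W ⟶ Z), IsConflation j d) →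
    ∃ (Z : A) (d : W ⟶ Z), IsConflation (i ≫ j) d
  ex2 : ∀ ⦃Y Z Z' : A⦄ (d : Y ⟶ Z) (f : Z' ⟶ Z),
    (∃ (X : A) (i : X ⟶ Y), IsConflation i d) →
    ∃ (Y' : A) (d' : Y' ⟶ Z') (f' : Y' ⟶ Y),
      IsPullback d' f' f d ∧ ∃ (X : A) (i : X ⟶ Y'), IsConflation i d'
  ex2op : ∀ ⦃X Y X' : A⦄ (i : X ⟶ Y) (f : X ⟶ X'),
    (∃ (Z : A) (d : Y ⟶ Z), IsConflation i d) →
    ∃ (Y' : A) (i' : X' ⟶ Y') (f' : Y ⟶ Y'),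
      IsPushout i f f' i' ∧ ∃ (Z : A) (d : Y' ⟶ Z), IsConflation i' d

namespace ExactStructure

variable (E : ExactStructure A)

/-- `d` is a deflation. -/
def IsDeflation {Y Z : A} (d : Y ⟶ Z) : Prop :=
  ∃ (X : A) (i : X ⟶ Y), E.IsConflation i d

/-- `i` is an inflation. -/
def IsInflation {X Y : A} (i : X ⟶ Y) : Prop :=
  ∃ (Z : A) (d : Y ⟶ Z), E.IsConflation i d

/-- projective object: every deflation onto it splits. -/
def Proj (P : A) : Prop :=
  ∀ ⦃Y : A⦄ (d : Y ⟶ P), E.IsDeflation d → ∃ s : P ⟶ Y, s ≫ d = 𝟙 P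

/-- injective object: every inflation out of it splits. -/
def Inj (I : A) : Prop :=
  ∀ ⦃Y : A⦄ (i : I ⟶ Y), E.IsInflation i → ∃ r : Y ⟶ I, i ≫ r = 𝟙 I

/-- enough projective objects -/
def EnoughProj : Prop :=
  ∀ X : A, ∃ (P : A) (d : P ⟶ X), E.Proj P ∧ E.IsDeflation d

/-- enough injective objects -/
def EnoughInj : Prop :=
  ∀ X : A, ∃ (I : A) (i : X ⟶ I), E.Inj I ∧ E.IsInflation i

/-- A Frobenius category: enough projectives, enough injectives, and the two classes coincide. -/
structure IsFrobenius : Prop where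
  enoughProj : E.EnoughProj
  enoughInj : E.EnoughInj
  proj_iff_inj : ∀ P : A, E.Proj P ↔ E.Inj P

end ExactStructure

end Defs

end Paper
namespace Paper

open CategoryTheory Limits

section Modules

variable (C : Type u) [Category.{v} C] [Preadditive C]

/-- The category `Mod C` of (additive) contravariant functors from `C` to abelian
groups; a Cohen-Macaulay module is automatically additive, so we work in the ambient
functor category, which has the same Hom-groups. -/
abbrev ModC := Cᵒᵖ ⥤ AddCommGrpCat.{v}

/-- A `C`-module is finitely generated projective iff it is a direct summand of a
representable module `H_X = Hom_C(-, X)`. -/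
def IsFGProj (M : ModC C) : Prop :=
  ∃ (X : C) (s : M ⟶ preadditiveYoneda.obj X) (r : preadditiveYoneda.obj X ⟶ M),
    s ≫ r = 𝟙 M

/-- `0 ⟶ L ⟶u M ⟶v N ⟶ 0` is a short exact sequence of `C`-modules
(exactness is objectwise). -/
def IsSES {L M N : ModC C} (u : L ⟶ M) (v : M ⟶ N) : Prop :=
  ∀ c : Cᵒᵖ, Function.Injective (u.app c) ∧ Function.Surjective (v.app c) ∧
    ∀ x : M.obj c, (v.app c) x = 0 ↔ ∃ y : L.obj c, (u.app c) y = x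

/-- A totally acyclic complex: an acyclic complex of finitely generated projective
`C`-modules such that `Hom(P^•, H_X)` is acyclic for every object `X` of `C`. -/
structure IsTotallyAcyclic (P : ℤ → ModC C) (d : ∀ n : ℤ, P n ⟶ P (n + 1)) : Prop where
  fgProj : ∀ n, IsFGProj C (P n)
  comp_zero : ∀ n, d n ≫ d (n + 1) = 0
  acyclic : ∀ (n : ℤ) (c : Cᵒᵖ) (x : (P (n + 1)).obj c),
    ((d (n + 1)).app c) x = 0 → ∃ y : (P n).obj c, ((d n).app c) y = x
  hom_acyclic : ∀ (n : ℤ) (X : C) (g : P (n + 1) ⟶ preadditiveYoneda.obj X),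
    d n ≫ g = 0 → ∃ h : P (n + 1 + 1) ⟶ preadditiveYoneda.obj X, d (n + 1) ≫ h = g

/-- A `C`-module is (maximal) Cohen-Macaulay iff it is isomorphic to the `0`-th
cocycle `Z^0(P^•)` (i.e. the kernel of `d^0`) of some totally acyclic complex. -/
def IsCM (M : ModC C) : Prop :=
  ∃ (P : ℤ → ModC C) (d : ∀ n : ℤ, P n ⟶ P (n + 1)), IsTotallyAcyclic C P d ∧
    ∃ ι : M ⟶ P 0, ι ≫ d 0 = 0 ∧ ∀ c : Cᵒᵖ,
      Function.Injective (ι.app c) ∧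
      ∀ x : (P 0).obj c, ((d 0).app c) x = 0 → ∃ m : M.obj c, (ι.app c) m = x

end Modules

section ResYoneda

variable {A : Type u} [Category.{v} A] [Preadditive A]

/-- The full subcategory `P` of projective objects of `(A, E)`. -/
abbrev ProjCat (E : ExactStructure A) := ObjectProperty.FullSubcategory (fun P : A => E.Proj P)

/-- The restricted Yoneda functor `h : A ⥤ Mod P`, sending `X` to
`h_X = Hom_A(-, X)|_P`. -/
def resYoneda (E : ExactStructure A) : A ⥤ ModC (ProjCat E) :=
  preadditiveYoneda ⋙
    (Functor.whiskeringLeft (ProjCat E)ᵒᵖ Aᵒᵖ AddCommGrpCat.{v}).obj (ObjectProperty.ι _).op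

end ResYoneda

end Paper

/-! Splicing conflations `Zⁿ ⟶ Tⁿ ⟶ Zⁿ⁺¹` with projective-injective middle terms, obtained
to the right from enough injectives and to the left from enough projectives, gives a complete
resolution `T^•` of `X = Z⁰`. Each `h_T` is the representable `H_T`, and `h_{T^•}` is acyclic
because maps from projectives lift along the deflations `Tⁿ ⟶ Zⁿ⁺¹`. By the Yoneda lemma
`Hom(h_{T^•}, H_Q) = Hom_A(T^•, Q)`, which is acyclic because maps into the injective `Q`
extend along the inflations `Zⁿ ⟶ Tⁿ`. Since `h` is left exact on conflations, `h_X` is the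
kernel of `h_{T⁰} ⟶ h_{T¹}`. -/

namespace Paper

open CategoryTheory Limits Opposite

section TwoSidedIterate

variable {α : Type*} (σ ω : α → α) (x : α)

def twoSidedIterate : ℤ → α
  | .ofNat k => σ^[k] x
  | .negSucc k => ω^[k + 1] x

lemma twoSidedIterate_natCast (k : ℕ) : twoSidedIterate σ ω x k = σ^[k] x := rfl

lemma twoSidedIterate_neg_natCast (k : ℕ) : twoSidedIterate σ ω x (-k) = ω^[k] x := by
  cases k <;> rfl

variable {σ ω}

lemma twoSidedIterate_rel {r : α → α → Prop} (hσ : ∀ y, r y (σ y)) (hω : ∀ y, r (ω y) y)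
    (n : ℤ) : r (twoSidedIterate σ ω x n) (twoSidedIterate σ ω x (n + 1)) := by
  obtain ⟨k, rfl | rfl⟩ := n.eq_nat_or_neg
  · rw [← Nat.cast_succ, twoSidedIterate_natCast, twoSidedIterate_natCast,
      Function.iterate_succ_apply']
    exact hσ _
  · rcases k with _ | k
    · exact hσ x
    · rw [show -((k + 1 : ℕ) : ℤ) + 1 = -k by push_cast; ring, twoSidedIterate_neg_natCast,
        twoSidedIterate_neg_natCast, Function.iterate_succ_apply']
      exact hω _

end TwoSidedIterate

section ExactCategory

variable {A : Type u} [Category.{v} A] [Preadditive A]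

lemma IsKer.cancel_right {X Y Z W : A} {i : X ⟶ Y} {d : Y ⟶ Z} (h : IsKer i d)
    {a b : W ⟶ X} (hab : a ≫ i = b ≫ i) : a = b := by
  obtain ⟨c, -, hc⟩ := h.2 (a ≫ i) (by rw [Category.assoc, h.1, comp_zero])
  rw [hc a rfl, hc b hab.symm]

lemma IsCoker.cancel_left {X Y Z W : A} {i : X ⟶ Y} {d : Y ⟶ Z} (h : IsCoker i d)
    {a b : Z ⟶ W} (hab : d ≫ a = d ≫ b) : a = b := by
  obtain ⟨c, -, hc⟩ := h.2 (d ≫ a) (by rw [← Category.assoc, h.1, zero_comp])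
  rw [hc a rfl, hc b hab.symm]

namespace ExactStructure

variable {E : ExactStructure A}

lemma Proj.exists_lift {P Y Z : A} (hP : E.Proj P) {d : Y ⟶ Z} (hd : E.IsDeflation d)
    (g : P ⟶ Z) : ∃ s : P ⟶ Y, s ≫ d = g := by
  obtain ⟨Y', d', f', hpb, hd'⟩ := E.ex2 d g hd
  obtain ⟨s, hs⟩ := hP d' hd'
  exact ⟨s ≫ f', by rw [Category.assoc, ← hpb.w, reassoc_of% hs]⟩

lemma Inj.exists_extend {I X Y : A} (hI : E.Inj I) {i : X ⟶ Y} (hi : E.IsInflation i)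
    (g : X ⟶ I) : ∃ h : Y ⟶ I, i ≫ h = g := by
  obtain ⟨Y', i', f', hpo, hi'⟩ := E.ex2op i g hi
  obtain ⟨r, hr⟩ := hI i' hi'
  exact ⟨f' ≫ r, by rw [← Category.assoc, hpo.w, Category.assoc, hr, Category.comp_id]⟩

variable (E) in
def IsSyzygyOf (X Y : A) : Prop :=
  ∃ (T : A) (i : X ⟶ T) (d : T ⟶ Y), E.Proj T ∧ E.IsConflation i d

lemma EnoughProj.exists_isSyzygyOf (h : E.EnoughProj) (Y : A) : ∃ X, E.IsSyzygyOf X Y := by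
  obtain ⟨T, d, hT, X, i, hc⟩ := h Y
  exact ⟨X, T, i, d, hT, hc⟩

lemma EnoughInj.exists_isSyzygyOf (h : E.EnoughInj) (hIP : ∀ I, E.Inj I → E.Proj I) (X : A) :
    ∃ Y, E.IsSyzygyOf X Y := by
  obtain ⟨T, i, hT, Y, d, hc⟩ := h X
  exact ⟨Y, T, i, d, hIP T hT, hc⟩

variable (E) in
structure CompleteResolution where
  cocycle : ℤ → A
  term : ℤ → A
  ι : ∀ n, cocycle n ⟶ term n
  π : ∀ n, term n ⟶ cocycle (n + 1)
  proj : ∀ n, E.Proj (term n)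
  conflation : ∀ n, E.IsConflation (ι n) (π n)

lemma IsFrobenius.exists_completeResolution (hE : E.IsFrobenius) (X : A) :
    ∃ R : E.CompleteResolution, R.cocycle 0 = X := by
  choose ω hω using hE.enoughProj.exists_isSyzygyOf
  choose σ hσ using hE.enoughInj.exists_isSyzygyOf fun I => (hE.proj_iff_inj I).2
  choose T ι π hT hc using twoSidedIterate_rel X hσ hω
  exact ⟨⟨twoSidedIterate σ ω X, T, ι, π, hT, hc⟩, rfl⟩

namespace CompleteResolution

variable (R : E.CompleteResolution)

def d (n : ℤ) : R.term n ⟶ R.term (n + 1) := R.π n ≫ R.ι (n + 1)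

lemma isKer (n : ℤ) : IsKer (R.ι n) (R.π n) := E.ker_of_conflation (R.conflation n)

lemma isCoker (n : ℤ) : IsCoker (R.ι n) (R.π n) := E.coker_of_conflation (R.conflation n)

lemma ι_π (n : ℤ) : R.ι n ≫ R.π n = 0 := (R.isKer n).1

lemma d_comp_d (n : ℤ) : R.d n ≫ R.d (n + 1) = 0 := by
  rw [d, d, Category.assoc, ← Category.assoc (R.ι _), ι_π, zero_comp, comp_zero]

lemma ι_comp_d (n : ℤ) : R.ι n ≫ R.d n = 0 := by
  rw [d, ← Category.assoc, ι_π, zero_comp]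

lemma exists_comp_ι_eq {Y : A} {n : ℤ} (x : Y ⟶ R.term n) (hx : x ≫ R.d n = 0) :
    ∃ y : Y ⟶ R.cocycle n, y ≫ R.ι n = x := by
  obtain ⟨y, hy, -⟩ := (R.isKer n).2 x
    ((R.isKer (n + 1)).cancel_right (by rw [zero_comp, Category.assoc]; exact hx))
  exact ⟨y, hy⟩

lemma exists_comp_d_eq_of_proj {Q : A} (hQ : E.Proj Q) {n : ℤ} (x : Q ⟶ R.term (n + 1))
    (hx : x ≫ R.d (n + 1) = 0) : ∃ y : Q ⟶ R.term n, y ≫ R.d n = x := by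
  obtain ⟨y, rfl⟩ := R.exists_comp_ι_eq x hx
  obtain ⟨w, rfl⟩ := hQ.exists_lift ⟨_, _, R.conflation n⟩ y
  exact ⟨w, (Category.assoc _ _ _).symm⟩

lemma exists_d_comp_eq_of_inj {I : A} (hI : E.Inj I) {n : ℤ} (g : R.term (n + 1) ⟶ I)
    (hg : R.d n ≫ g = 0) : ∃ h : R.term (n + 1 + 1) ⟶ I, R.d (n + 1) ≫ h = g := by
  have hιg : R.ι (n + 1) ≫ g = 0 :=
    (R.isCoker n).cancel_left (by rw [comp_zero, ← Category.assoc]; exact hg)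
  obtain ⟨g', hg', -⟩ := (R.isCoker (n + 1)).2 g hιg
  obtain ⟨h, rfl⟩ := hI.exists_extend ⟨_, _, R.conflation (n + 1 + 1)⟩ g'
  exact ⟨h, by rw [d, Category.assoc, hg']⟩

end CompleteResolution

end ExactStructure

variable {E : ExactStructure A}

lemma resYoneda_map_app {Y Z : A} (f : Y ⟶ Z) (c : (ProjCat E)ᵒᵖ) (x : c.unop.obj ⟶ Y) :
    ((resYoneda E).map f).app c x = x ≫ f := rfl

instance : (resYoneda E).Additive where
  map_add {_ _ f g} := by
    ext
    exact Preadditive.comp_add _ _ _ _ _ _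

lemma resYoneda_map_injective {P Y : A} (hP : E.Proj P) :
    Function.Injective ((resYoneda E).map : (P ⟶ Y) → _) := by
  intro f g h
  have := ConcreteCategory.congr_hom (NatTrans.congr_app h (op ⟨P, hP⟩)) (𝟙 P)
  rwa [resYoneda_map_app, resYoneda_map_app, Category.id_comp, Category.id_comp] at this

lemma resYoneda_map_surjective {P Y : A} (hP : E.Proj P) :
    Function.Surjective ((resYoneda E).map : (P ⟶ Y) → _) := by
  intro g
  let f : P ⟶ Y := g.app (op ⟨P, hP⟩) (𝟙 P)
  refine ⟨f, ?_⟩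
  ext c (x : c.unop.obj ⟶ P)
  have := ConcreteCategory.congr_hom
    (g.naturality (InducedCategory.homMk x : c.unop ⟶ ⟨P, hP⟩).op) (𝟙 P)
  change g.app c (x ≫ 𝟙 P) = x ≫ f at this
  rw [Category.comp_id] at this
  exact this.symm

def resYonedaObjIso (P : ProjCat E) : (resYoneda E).obj P.obj ≅ preadditiveYoneda.obj P :=
  NatIso.ofComponents
    (fun _ => AddEquiv.toAddCommGrpIso
      { toFun := fun f => InducedCategory.homMk f
        invFun := InducedCategory.Hom.hom
        left_inv := fun _ => rfl
        right_inv := fun _ => rfl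
        map_add' := fun _ _ => rfl })
    (fun _ => rfl)

lemma isFGProj_resYoneda_obj {P : A} (hP : E.Proj P) :
    IsFGProj (ProjCat E) ((resYoneda E).obj P) :=
  ⟨⟨P, hP⟩, (resYonedaObjIso ⟨P, hP⟩).hom, (resYonedaObjIso ⟨P, hP⟩).inv, Iso.hom_inv_id _⟩

lemma ExactStructure.CompleteResolution.isCM_resYoneda_cocycle_zero (R : E.CompleteResolution)
    (hPI : ∀ P, E.Proj P → E.Inj P) : IsCM (ProjCat E) ((resYoneda E).obj (R.cocycle 0)) := by
  refine ⟨fun n => (resYoneda E).obj (R.term n), fun n => (resYoneda E).map (R.d n),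
    ⟨fun n => isFGProj_resYoneda_obj (R.proj n), fun n => ?_, ?_, ?_⟩,
    (resYoneda E).map (R.ι 0), ?_, fun _ => ⟨?_, ?_⟩⟩
  · rw [← Functor.map_comp, R.d_comp_d, Functor.map_zero]
  · intro n c x hx
    exact R.exists_comp_d_eq_of_proj c.unop.property x hx
  · intro n Q g hg
    obtain ⟨f, hf⟩ := resYoneda_map_surjective (R.proj (n + 1)) (g ≫ (resYonedaObjIso Q).inv)
    have hdf : R.d n ≫ f = 0 :=
      resYoneda_map_injective (R.proj n) (by simp [hf, reassoc_of% hg])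
    obtain ⟨h, rfl⟩ := R.exists_d_comp_eq_of_inj (hPI _ Q.property) f hdf
    refine ⟨(resYoneda E).map h ≫ (resYonedaObjIso Q).hom, ?_⟩
    rw [← Category.assoc, ← Functor.map_comp, hf, Category.assoc, Iso.inv_hom_id,
      Category.comp_id]
  · rw [← Functor.map_comp, R.ι_comp_d, Functor.map_zero]
  · intro x y h
    exact (R.isKer 0).cancel_right h
  · intro x hx
    exact R.exists_comp_ι_eq x hx

end ExactCategory

theorem resYoneda_isCM_general
    {A : Type u} [Category.{v} A] [Preadditive A]
    (E : ExactStructure A) (hE : E.IsFrobenius) (X : A) :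
    IsCM (ProjCat E) ((resYoneda E).obj X) := by
  obtain ⟨R, rfl⟩ := hE.exists_completeResolution X
  exact R.isCM_resYoneda_cocycle_zero fun P => (hE.proj_iff_inj P).1

/-- **Theorem (Step 1 of Theorem 4.2).** For a Frobenius category `A` with subcategory
of projectives `P`, the restricted Yoneda functor takes values in Cohen-Macaulay
`P`-modules: `h_X` is Cohen-Macaulay for every object `X` of `A`. -/
theorem resYoneda_isCM
    {A : Type u} [Category.{v} A] [Preadditive A] [HasZeroObject A] [HasBinaryBiproducts A]
    (E : ExactStructure A) (hE : E.IsFrobenius) (X : A) :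
    IsCM (ProjCat E) ((resYoneda E).obj X) :=
  resYoneda_isCM_general E hE X

end Paper
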